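/- Let α be κ-Diophantine (κ ≥ 1). For any ε > 0 there is a constant C (depending on α, κ, ε) such that for all T ≥ 2, δ ∈ (0,1), and ℓ ≥ 1: Σ_{n=1}^{⌊ℓ/δ⌋} Σ_{m=1}^{⌊T⌋} min(1/‖2nmα‖, T) ≤ C (ℓ/δ)^{1+ε} T^{2−1/κ+ε}, where ‖x‖ denotes distance to the nearest integer. -/

import Mathlib

open Finset

/-- distance from `x` to the nearest integer -/
noncomputable def dni (x : ℝ) : ℝ := |x - round x|

/-- `min (1/‖y‖, T)` with the convention that this is `T` when `‖y‖ = 0`. -/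
noncomputable def minInv (y T : ℝ) : ℝ := if dni y = 0 then T else min (1 / dni y) T

/-!
Interpolating `min (1/y, T) ≤ y ^ (-1/κ) T ^ (1 - 1/κ)` reduces the double sum to
`T ^ (1 - 1/κ) ∑_{n,m} ‖2nmα‖ ^ (-1/κ)`. Grouping the pairs by `a = nm` costs a factor
`σ₀(a) ≪ a ^ (ε/2)`, which leaves the moment `∑_{a ≤ A} ‖2aα‖ ^ (-1/κ)`. Two indices `a < b`
with `‖2aα‖, ‖2bα‖ ≤ x` satisfy `‖2(b - a)α‖ ≤ 2x`, so by the Diophantine condition they are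
`≫ x ^ (-1/κ)` apart; hence at most `1 + O(A/k)` of the terms are `≥ k`, and summing over the
levels `k ≤ O(A)` bounds the moment by `O(A log A)`.
-/

open Real

lemma dni_sub_le (x y : ℝ) : dni (x - y) ≤ dni x + dni y :=
  calc dni (x - y) ≤ |x - y - ((round x - round y : ℤ) : ℝ)| := round_le _ _
    _ = |(x - round x) - (y - round y)| := by push_cast; ring_nf
    _ ≤ dni x + dni y := abs_sub _ _

lemma min_le_rpow_mul_rpow {a b s : ℝ} (ha : 0 < a) (hb : 0 < b) (hs₀ : 0 ≤ s) (hs₁ : s ≤ 1) :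
    min a b ≤ a ^ s * b ^ (1 - s) := by
  have hm : 0 < min a b := lt_min ha hb
  calc min a b = min a b ^ s * min a b ^ (1 - s) := by
        rw [← rpow_add hm, add_sub_cancel, rpow_one]
    _ ≤ a ^ s * b ^ (1 - s) := by
        gcongr ?_ ^ _ * ?_ ^ _
        exacts [min_le_left a b, min_le_right a b]

lemma minInv_le_rpow_mul_rpow {y T s : ℝ} (hy : 0 < dni y) (hT : 0 < T) (hs₀ : 0 ≤ s)
    (hs₁ : s ≤ 1) : minInv y T ≤ dni y ^ (-s) * T ^ (1 - s) := by
  rw [minInv, if_neg hy.ne', rpow_neg hy.le, ← inv_rpow hy.le, ← one_div]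
  exact min_le_rpow_mul_rpow (by positivity) hT hs₀ hs₁

lemma card_le_one_add_div_of_le_sub {S : Finset ℕ} {A : ℕ} {g : ℝ} (hg : 0 < g)
    (hS : ∀ a ∈ S, a ≤ A) (hgap : ∀ a ∈ S, ∀ b ∈ S, a < b → g ≤ (b : ℝ) - a) :
    (#S : ℝ) ≤ 1 + A / g := by
  -- distinct points of `S` lie in distinct intervals `[j g, (j + 1) g)`
  have hlt : ∀ a ∈ S, ∀ b ∈ S, a < b → ⌊(a : ℝ) / g⌋₊ < ⌊(b : ℝ) / g⌋₊ := by
    intro a ha b hb hab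
    rw [Nat.lt_iff_add_one_le, ← Nat.floor_add_one (by positivity)]
    refine Nat.floor_le_floor ?_
    rw [div_add_one hg.ne', div_le_div_iff_of_pos_right hg]
    linarith [hgap a ha b hb hab]
  have hinj : Set.InjOn (fun a : ℕ => ⌊(a : ℝ) / g⌋₊) S := by
    intro a ha b hb hab
    rcases lt_trichotomy a b with h | h | h
    · exact absurd hab (hlt a ha b hb h).ne
    · exact h
    · exact absurd hab (hlt b hb a ha h).ne'
  have hmaps : ∀ a ∈ S, ⌊(a : ℝ) / g⌋₊ ∈ range (⌊(A : ℝ) / g⌋₊ + 1) := fun a ha =>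
    mem_range_succ_iff.2 <| Nat.floor_le_floor <| by gcongr; exact_mod_cast hS a ha
  have hcard := card_le_card_of_injOn _ hmaps hinj
  rw [card_range] at hcard
  calc (#S : ℝ) ≤ ⌊(A : ℝ) / g⌋₊ + 1 := by exact_mod_cast hcard
    _ ≤ 1 + A / g := by linarith [Nat.floor_le (by positivity : (0 : ℝ) ≤ A / g)]

lemma card_filter_natCast_le_eq_floor {v : ℝ} {K : ℕ} (hv : v ≤ K) :
    #{k ∈ Icc 1 K | ((k : ℕ) : ℝ) ≤ v} = ⌊v⌋₊ := by
  have : {k ∈ Icc 1 K | ((k : ℕ) : ℝ) ≤ v} = Icc 1 ⌊v⌋₊ := by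
    ext k
    simp only [mem_filter, mem_Icc]
    constructor
    · rintro ⟨⟨hk, -⟩, hkv⟩
      exact ⟨hk, (Nat.le_floor_iff' (by omega)).2 hkv⟩
    · rintro ⟨hk, hkv⟩
      exact ⟨⟨hk, hkv.trans (Nat.floor_le_of_le hv)⟩, (Nat.le_floor_iff' (by omega)).1 hkv⟩
  simp [this]

lemma sum_le_card_add_sum_card_filter_le {ι : Type*} (s : Finset ι) (v : ι → ℝ) (K : ℕ)
    (hK : ∀ a ∈ s, v a ≤ K) :
    ∑ a ∈ s, v a ≤ #s + ∑ k ∈ Icc 1 K, (#{a ∈ s | (k : ℝ) ≤ v a} : ℝ) := by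
  have hswap : ∑ k ∈ Icc 1 K, (#{a ∈ s | (k : ℝ) ≤ v a} : ℝ) = ∑ a ∈ s, (⌊v a⌋₊ : ℝ) := by
    simp only [card_filter, Nat.cast_sum]
    rw [sum_comm]
    refine sum_congr rfl fun a ha => ?_
    rw [← card_filter_natCast_le_eq_floor (hK a ha), card_filter, Nat.cast_sum]
  rw [hswap, card_eq_sum_ones, Nat.cast_sum, ← sum_add_distrib]
  exact sum_le_sum fun a _ => by push_cast; linarith [Nat.sub_one_lt_floor (v a)]

lemma sum_le_of_card_filter_le {ι : Type*} (s : Finset ι) (v : ι → ℝ) (K : ℕ) {X : ℝ}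
    (hX : 0 ≤ X) (hK : ∀ a ∈ s, v a ≤ K)
    (hcard : ∀ k : ℕ, 0 < k → (#{a ∈ s | (k : ℝ) ≤ v a} : ℝ) ≤ 1 + X / k) :
    ∑ a ∈ s, v a ≤ #s + K + X * (1 + log K) := by
  have hharm : ∑ k ∈ Icc 1 K, ((k : ℝ))⁻¹ ≤ 1 + log K := by
    simpa [harmonic_eq_sum_Icc] using harmonic_le_one_add_log K
  calc ∑ a ∈ s, v a ≤ #s + ∑ k ∈ Icc 1 K, (#{a ∈ s | (k : ℝ) ≤ v a} : ℝ) :=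
        sum_le_card_add_sum_card_filter_le s v K hK
    _ ≤ #s + ∑ k ∈ Icc 1 K, (1 + X * (k : ℝ)⁻¹) := by
        gcongr with k hk
        simpa [div_eq_mul_inv] using hcard k (mem_Icc.1 hk).1
    _ ≤ #s + K + X * (1 + log K) := by
        rw [sum_add_distrib, ← mul_sum]
        simp only [sum_const, Nat.card_Icc, add_tsub_cancel_right, nsmul_eq_mul, mul_one]
        linarith [mul_le_mul_of_nonneg_left hharm hX]

lemma sum_Icc_sum_Icc_mul_le_sum_card_divisors_mul (N M : ℕ) {g : ℕ → ℝ}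
    (hg : ∀ a, 0 ≤ g a) :
    ∑ n ∈ Icc 1 N, ∑ m ∈ Icc 1 M, g (n * m) ≤ ∑ a ∈ Icc 1 (N * M), #a.divisors * g a := by
  have hmaps : ∀ x ∈ Icc 1 N ×ˢ Icc 1 M, x.1 * x.2 ∈ Icc 1 (N * M) := by
    intro x hx
    simp only [mem_product, mem_Icc] at hx ⊢
    exact ⟨Nat.mul_le_mul hx.1.1 hx.2.1, Nat.mul_le_mul hx.1.2 hx.2.2⟩
  rw [← sum_product', ← sum_fiberwise_of_maps_to hmaps]
  refine sum_le_sum fun a ha => ?_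
  have hfiber : {x ∈ Icc 1 N ×ˢ Icc 1 M | x.1 * x.2 = a} ⊆ a.divisorsAntidiagonal := by
    intro x hx
    rw [mem_filter] at hx
    rw [Nat.mem_divisorsAntidiagonal]
    exact ⟨hx.2, by have := (mem_Icc.1 (hmaps x hx.1)).1; omega⟩
  have hcard : #{x ∈ Icc 1 N ×ˢ Icc 1 M | x.1 * x.2 = a} ≤ #a.divisors :=
    calc _ ≤ #a.divisorsAntidiagonal := card_le_card hfiber
      _ = #a.divisors := by rw [← Nat.map_div_right_divisors, card_map]
  calc ∑ x ∈ Icc 1 N ×ˢ Icc 1 M with x.1 * x.2 = a, g (x.1 * x.2)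
      = #{x ∈ Icc 1 N ×ˢ Icc 1 M | x.1 * x.2 = a} * g a := by
        rw [sum_congr rfl fun x hx => by rw [(mem_filter.1 hx).2], sum_const, nsmul_eq_mul]
    _ ≤ #a.divisors * g a := by gcongr; exact hg a

lemma add_one_le_max_mul_pow {r t : ℝ} (hr : 1 < r) (hrt : r ≤ t) (k : ℕ) :
    (k + 1 : ℝ) ≤ max 1 (r - 1)⁻¹ * t ^ k := by
  have hbern : 1 + k * (r - 1) ≤ t ^ k := by
    have := one_add_le_pow_of_two_add_nonneg (a := r - 1) (by linarith) k
    rw [add_sub_cancel] at this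
    exact this.trans (pow_le_pow_left₀ (by linarith) hrt k)
  have hM₁ : 1 ≤ max 1 (r - 1)⁻¹ := le_max_left _ _
  have hM₂ : 1 ≤ max 1 (r - 1)⁻¹ * (r - 1) :=
    calc 1 = (r - 1)⁻¹ * (r - 1) := (inv_mul_cancel₀ (by linarith)).symm
      _ ≤ _ := mul_le_mul_of_nonneg_right (le_max_right _ _) (by linarith)
  have hk : (0 : ℝ) ≤ k := k.cast_nonneg
  nlinarith

theorem exists_card_divisors_le_mul_rpow {e : ℝ} (he : 0 < e) :
    ∃ C > 0, ∀ n : ℕ, (#n.divisors : ℝ) ≤ C * (n : ℝ) ^ e := by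
  set r : ℝ := 2 ^ e
  have hr : 1 < r := one_lt_rpow (by norm_num) he
  set M : ℝ := max 1 (r - 1)⁻¹
  have hM : 1 ≤ M := le_max_left _ _
  -- small primes `p < B` are exactly those with `p ^ e < 2`
  set B : ℝ := 2 ^ e⁻¹
  refine ⟨M ^ ⌈B⌉₊, by positivity, fun n => ?_⟩
  rcases eq_or_ne n 0 with rfl | hn
  · simp only [Nat.divisors_zero, card_empty, Nat.cast_zero]; positivity
  have hprime : ∀ p ∈ n.primeFactors, (n.factorization p + 1 : ℝ)
      ≤ (if (p : ℝ) < B then M else 1) * ((p : ℝ) ^ e) ^ n.factorization p := by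
    intro p hp
    have hp : (2 : ℝ) ≤ p := by exact_mod_cast (Nat.prime_of_mem_primeFactors hp).two_le
    split_ifs with hpB
    · exact add_one_le_max_mul_pow hr (rpow_le_rpow zero_le_two hp he.le) _
    · have h2 : 2 ≤ (p : ℝ) ^ e :=
        calc (2 : ℝ) = B ^ e := by rw [← rpow_mul zero_le_two, inv_mul_cancel₀ he.ne', rpow_one]
          _ ≤ (p : ℝ) ^ e := rpow_le_rpow (by positivity) (not_lt.1 hpB) he.le
      simpa [show max (1 : ℝ) (2 - 1)⁻¹ = 1 by norm_num] using
        add_one_le_max_mul_pow one_lt_two h2 (n.factorization p)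
  have hsmall : ∏ p ∈ n.primeFactors, (if (p : ℝ) < B then M else 1) ≤ M ^ ⌈B⌉₊ := by
    rw [prod_ite, prod_const_one, mul_one, prod_const]
    refine pow_le_pow_right₀ hM ((card_le_card fun p hp => ?_).trans_eq (card_range _))
    rw [mem_range]
    exact_mod_cast (mem_filter.1 hp).2.trans_le (Nat.le_ceil B)
  have hn_eq : (n : ℝ) ^ e = ∏ p ∈ n.primeFactors, ((p : ℝ) ^ e) ^ n.factorization p := by
    conv_lhs =>
      rw [← Nat.prod_factorization_pow_eq_self hn, Nat.prod_factorization_eq_prod_primeFactors]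
    push_cast
    rw [← finsetProd_rpow _ _ (fun p _ => by positivity)]
    exact prod_congr rfl fun p _ => (rpow_pow_comm (by positivity) _ _).symm
  calc (#n.divisors : ℝ) = ∏ p ∈ n.primeFactors, (n.factorization p + 1 : ℝ) := by
        rw [Nat.card_divisors hn]; push_cast; rfl
    _ ≤ ∏ p ∈ n.primeFactors,
          (if (p : ℝ) < B then M else 1) * ((p : ℝ) ^ e) ^ n.factorization p :=
        prod_le_prod (fun p _ => by positivity) hprime
    _ ≤ M ^ ⌈B⌉₊ * (n : ℝ) ^ e := by
        rw [prod_mul_distrib, hn_eq]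
        gcongr

def DiophantineWith (κ c β : ℝ) : Prop :=
  0 < c ∧ ∀ q : ℕ, 0 < q → c / (q : ℝ) ^ κ ≤ dni (q * β)

namespace DiophantineWith

variable {κ c β : ℝ}

theorem of_forall_le_abs_sub (hc : 0 < c)
    (h : ∀ q : ℕ, 0 < q → ∀ p : ℤ, c / (q : ℝ) ^ κ ≤ |q * β - p|) : DiophantineWith κ c β :=
  ⟨hc, fun q hq => h q hq _⟩

theorem two_mul (h : DiophantineWith κ c β) : DiophantineWith κ (c / 2 ^ κ) (2 * β) := by
  refine ⟨div_pos h.1 (by positivity), fun q hq => ?_⟩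
  have := h.2 (2 * q) (by omega)
  rw [Nat.cast_mul, Nat.cast_two, mul_rpow zero_le_two q.cast_nonneg, ← div_div] at this
  rwa [mul_assoc, mul_left_comm] at this

theorem dni_pos (h : DiophantineWith κ c β) {a : ℕ} (ha : 0 < a) : 0 < dni (a * β) :=
  lt_of_lt_of_le (div_pos h.1 (by positivity)) (h.2 a ha)

theorem le_sub_of_dni_le (h : DiophantineWith κ c β) (hκ : 0 < κ) {x : ℝ} (hx : 0 < x)
    {a b : ℕ} (hab : a < b) (ha : dni (a * β) ≤ x) (hb : dni (b * β) ≤ x) :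
    (c / (2 * x)) ^ κ⁻¹ ≤ (b : ℝ) - a := by
  have hc := h.1
  have hq : (0 : ℝ) < (b : ℝ) - a := sub_pos.2 (by exact_mod_cast hab)
  have hdni : c / ((b : ℝ) - a) ^ κ ≤ 2 * x := by
    have := h.2 (b - a) (by omega)
    rw [Nat.cast_sub hab.le, sub_mul] at this
    linarith [dni_sub_le (b * β) (a * β)]
  rw [rpow_inv_le_iff_of_pos (by positivity) hq.le hκ]
  rw [div_le_iff₀ (by positivity)] at hdni ⊢
  rwa [mul_comm]

theorem card_filter_dni_le (h : DiophantineWith κ c β) (hκ : 0 < κ) {x : ℝ} (hx : 0 < x)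
    (A : ℕ) : (#{a ∈ Icc 1 A | dni ((a : ℕ) * β) ≤ x} : ℝ) ≤ 1 + A * (2 * x / c) ^ κ⁻¹ := by
  have hc := h.1
  have := card_le_one_add_div_of_le_sub (S := {a ∈ Icc 1 A | dni ((a : ℕ) * β) ≤ x})
    (by positivity : 0 < (c / (2 * x)) ^ κ⁻¹) (fun a ha => (mem_Icc.1 (mem_filter.1 ha).1).2)
    fun a ha b hb hab => h.le_sub_of_dni_le hκ hx hab (mem_filter.1 ha).2 (mem_filter.1 hb).2
  rwa [div_eq_mul_inv, ← inv_rpow (by positivity), inv_div] at this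

theorem rpow_neg_inv_le (h : DiophantineWith κ c β) (hκ : 0 < κ) {a : ℕ} (ha : 0 < a) :
    dni (a * β) ^ (-κ⁻¹) ≤ c ^ (-κ⁻¹) * a := by
  have hc := h.1
  have ha' : (0 : ℝ) < a := by exact_mod_cast ha
  calc dni (a * β) ^ (-κ⁻¹) ≤ (c / (a : ℝ) ^ κ) ^ (-κ⁻¹) :=
        rpow_le_rpow_of_nonpos (by positivity) (h.2 a ha) (by simp [hκ.le])
    _ = c ^ (-κ⁻¹) * a := by
        rw [div_rpow hc.le (by positivity), ← rpow_mul ha'.le, mul_neg, mul_inv_cancel₀ hκ.ne',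
          rpow_neg_one, div_inv_eq_mul]

theorem card_filter_le_rpow_neg_inv (h : DiophantineWith κ c β) (hκ : 0 < κ) {k : ℕ}
    (hk : 0 < k) (A : ℕ) :
    (#{a ∈ Icc 1 A | (k : ℝ) ≤ dni ((a : ℕ) * β) ^ (-κ⁻¹)} : ℝ)
      ≤ 1 + A * (2 / c) ^ κ⁻¹ / k := by
  have hc := h.1
  have hk' : (0 : ℝ) < k := by exact_mod_cast hk
  have hsub : {a ∈ Icc 1 A | (k : ℝ) ≤ dni ((a : ℕ) * β) ^ (-κ⁻¹)}
      ⊆ {a ∈ Icc 1 A | dni ((a : ℕ) * β) ≤ (k : ℝ) ^ (-κ)} := by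
    intro a ha
    rw [mem_filter, ← inv_neg] at ha
    rw [mem_filter]
    exact ⟨ha.1, (le_rpow_inv_iff_of_neg hk' (h.dni_pos (mem_Icc.1 ha.1).1)
      (neg_lt_zero.2 hκ)).1 ha.2⟩
  calc (#{a ∈ Icc 1 A | (k : ℝ) ≤ dni ((a : ℕ) * β) ^ (-κ⁻¹)} : ℝ)
      ≤ #{a ∈ Icc 1 A | dni ((a : ℕ) * β) ≤ (k : ℝ) ^ (-κ)} := by
        exact_mod_cast card_le_card hsub
    _ ≤ 1 + A * (2 * (k : ℝ) ^ (-κ) / c) ^ κ⁻¹ := h.card_filter_dni_le hκ (by positivity) A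
    _ = 1 + A * (2 / c) ^ κ⁻¹ / k := by
        rw [mul_div_right_comm, mul_rpow (by positivity) (by positivity), ← rpow_mul hk'.le,
          neg_mul, mul_inv_cancel₀ hκ.ne', rpow_neg_one]
        ring

theorem exists_sum_rpow_neg_inv_le (h : DiophantineWith κ c β) (hκ : 0 < κ) {e : ℝ}
    (he : 0 < e) :
    ∃ C > 0, ∀ A : ℕ, ∑ a ∈ Icc 1 A, dni (a * β) ^ (-κ⁻¹) ≤ C * (A : ℝ) ^ (1 + e) := by
  have hc := h.1
  set E : ℕ := ⌈c ^ (-κ⁻¹)⌉₊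
  have hE : (1 : ℝ) ≤ E := by exact_mod_cast Nat.one_le_iff_ne_zero.2 (by positivity)
  set D : ℝ := (2 / c) ^ κ⁻¹
  refine ⟨1 + E + D * (1 + e⁻¹) * E ^ e, by positivity, fun A => ?_⟩
  rcases Nat.eq_zero_or_pos A with rfl | hA
  · simp [zero_rpow (by positivity : 1 + e ≠ 0)]
  have hA' : (1 : ℝ) ≤ A := by exact_mod_cast hA
  have hK : ∀ a ∈ Icc 1 A, dni (a * β) ^ (-κ⁻¹) ≤ ((E * A : ℕ) : ℝ) := fun a ha =>
    (h.rpow_neg_inv_le hκ (mem_Icc.1 ha).1).trans <| by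
      push_cast
      gcongr
      exacts [Nat.le_ceil _, (mem_Icc.1 ha).2]
  have hsum := sum_le_of_card_filter_le (Icc 1 A) _ (E * A) (X := A * D) (by positivity) hK
    fun k hk => h.card_filter_le_rpow_neg_inv hκ hk A
  push_cast [Nat.card_Icc, add_tsub_cancel_right] at hsum
  have hAe : (1 : ℝ) ≤ (A : ℝ) ^ e := one_le_rpow hA' he.le
  -- `log K ≤ K ^ e / e` turns the harmonic sum into the loss `A ^ e`
  have hlog : 1 + log (E * A) ≤ (1 + e⁻¹) * E ^ e * (A : ℝ) ^ e := by
    have h1 : (1 : ℝ) ≤ E ^ e := one_le_rpow hE he.le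
    have h2 := log_le_rpow_div (by positivity : (0 : ℝ) ≤ E * A) he
    rw [mul_rpow (by positivity) (by positivity), div_eq_mul_inv] at h2
    nlinarith [mul_le_mul h1 hAe zero_le_one (by positivity)]
  calc ∑ a ∈ Icc 1 A, dni (a * β) ^ (-κ⁻¹)
      ≤ A + E * A + A * D * (1 + log (E * A)) := hsum
    _ ≤ A * A ^ e + E * A * A ^ e + A * D * ((1 + e⁻¹) * E ^ e * A ^ e) := by
        have h1 := le_mul_of_one_le_right (by positivity : (0 : ℝ) ≤ A) hAe
        have h2 := le_mul_of_one_le_right (by positivity : (0 : ℝ) ≤ E * A) hAe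
        have h3 := mul_le_mul_of_nonneg_left hlog (by positivity : (0 : ℝ) ≤ A * D)
        linarith
    _ = (1 + E + D * (1 + e⁻¹) * E ^ e) * (A : ℝ) ^ (1 + e) := by
        rw [rpow_add (by positivity), rpow_one]
        ring

theorem exists_sum_sum_minInv_le (h : DiophantineWith κ c β) (hκ : 1 ≤ κ) {ε : ℝ}
    (hε : 0 < ε) :
    ∃ C > 0, ∀ (N M : ℕ) (T : ℝ), 0 < T →
      ∑ n ∈ Icc 1 N, ∑ m ∈ Icc 1 M, minInv ((n : ℝ) * m * β) T
        ≤ C * T ^ (1 - κ⁻¹) * ((N * M : ℕ) : ℝ) ^ (1 + ε) := by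
  obtain ⟨C₁, hC₁, hdiv⟩ := exists_card_divisors_le_mul_rpow (half_pos hε)
  obtain ⟨C₂, hC₂, hmom⟩ := h.exists_sum_rpow_neg_inv_le (by linarith) (half_pos hε)
  refine ⟨C₁ * C₂, by positivity, fun N M T hT => ?_⟩
  set v : ℕ → ℝ := fun a => dni (a * β) ^ (-κ⁻¹)
  set P : ℝ := ((N * M : ℕ) : ℝ)
  have hv : ∀ a, 0 ≤ v a := fun a => rpow_nonneg (abs_nonneg _) _
  have hterm : ∀ n ∈ Icc 1 N, ∀ m ∈ Icc 1 M,
      minInv ((n : ℝ) * m * β) T ≤ T ^ (1 - κ⁻¹) * v (n * m) := by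
    intro n hn m hm
    rw [show (n : ℝ) * m * β = ((n * m : ℕ) : ℝ) * β by push_cast; ring]
    exact (minInv_le_rpow_mul_rpow (h.dni_pos (Nat.mul_le_mul (mem_Icc.1 hn).1 (mem_Icc.1 hm).1))
      hT (by positivity) (inv_le_one_of_one_le₀ hκ)).trans_eq (mul_comm _ _)
  have hdiv' : ∀ a ∈ Icc 1 (N * M), (#a.divisors : ℝ) ≤ C₁ * P ^ (ε / 2) :=
    fun a ha => (hdiv a).trans <| by gcongr; exact Nat.cast_le.2 (mem_Icc.1 ha).2
  have hsplit : P ^ (1 + ε) = P ^ (ε / 2) * P ^ (1 + ε / 2) := by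
    rw [← rpow_add' (by positivity) (by positivity)]
    ring_nf
  calc ∑ n ∈ Icc 1 N, ∑ m ∈ Icc 1 M, minInv ((n : ℝ) * m * β) T
      ≤ T ^ (1 - κ⁻¹) * ∑ n ∈ Icc 1 N, ∑ m ∈ Icc 1 M, v (n * m) := by
        simp only [mul_sum]
        exact sum_le_sum fun n hn => sum_le_sum fun m hm => hterm n hn m hm
    _ ≤ T ^ (1 - κ⁻¹) * ∑ a ∈ Icc 1 (N * M), C₁ * P ^ (ε / 2) * v a := by
        gcongr
        refine (sum_Icc_sum_Icc_mul_le_sum_card_divisors_mul N M hv).trans ?_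
        gcongr with a ha
        exacts [hv a, hdiv' a ha]
    _ ≤ T ^ (1 - κ⁻¹) * (C₁ * P ^ (ε / 2) * (C₂ * P ^ (1 + ε / 2))) := by
        rw [← mul_sum]
        gcongr
        exact hmom (N * M)
    _ = C₁ * C₂ * T ^ (1 - κ⁻¹) * P ^ (1 + ε) := by
        rw [hsplit]
        ring

end DiophantineWith

theorem double_sum_bound (α : ℝ) (κ : ℝ) (hκ : 1 ≤ κ)
    (hdio : ∃ c > 0, ∀ q : ℕ, 0 < q → ∀ p : ℤ, c / (q : ℝ) ^ κ ≤ |(q : ℝ) * α - (p : ℝ)|)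
    (ε : ℝ) (hε : 0 < ε) :
    ∃ C > 0, ∀ T δ ℓ : ℝ, 2 ≤ T → 0 < δ → δ < 1 → 1 ≤ ℓ →
      ∑ n ∈ Finset.Icc 1 ⌊ℓ / δ⌋₊, ∑ m ∈ Finset.Icc 1 ⌊T⌋₊,
          minInv (2 * (n : ℝ) * (m : ℝ) * α) T
        ≤ C * (ℓ / δ) ^ (1 + ε) * T ^ (2 - 1 / κ + ε) := by
  obtain ⟨c, hc, hα⟩ := hdio
  obtain ⟨C, hC, hsum⟩ :=
    (DiophantineWith.of_forall_le_abs_sub hc hα).two_mul.exists_sum_sum_minInv_le hκ hε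
  refine ⟨C, hC, fun T δ ℓ hT hδ _ hℓ => ?_⟩
  have hℓδ : 0 ≤ ℓ / δ := by positivity
  have hNM : ((⌊ℓ / δ⌋₊ * ⌊T⌋₊ : ℕ) : ℝ) ≤ ℓ / δ * T := by
    push_cast
    gcongr <;> exact Nat.floor_le (by positivity)
  have hsplit : T ^ (2 - 1 / κ + ε) = T ^ (1 - κ⁻¹) * T ^ (1 + ε) := by
    rw [← rpow_add (by positivity)]
    ring_nf
  calc ∑ n ∈ Icc 1 ⌊ℓ / δ⌋₊, ∑ m ∈ Icc 1 ⌊T⌋₊, minInv (2 * (n : ℝ) * (m : ℝ) * α) T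
      = ∑ n ∈ Icc 1 ⌊ℓ / δ⌋₊, ∑ m ∈ Icc 1 ⌊T⌋₊, minInv ((n : ℝ) * m * (2 * α)) T := by
        simp only [mul_left_comm (2 : ℝ), mul_assoc]
    _ ≤ C * T ^ (1 - κ⁻¹) * ((⌊ℓ / δ⌋₊ * ⌊T⌋₊ : ℕ) : ℝ) ^ (1 + ε) := hsum _ _ T (by linarith)
    _ ≤ C * T ^ (1 - κ⁻¹) * (ℓ / δ * T) ^ (1 + ε) := by gcongr
    _ = C * (ℓ / δ) ^ (1 + ε) * T ^ (2 - 1 / κ + ε) := by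
        rw [mul_rpow hℓδ (by positivity), hsplit]
        ring
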